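/- In Heisenberg space Nil₃(τ) = (ℝ³, g_N) with g_N = dx² + dy² + (τ(y dx − x dy) + dz)², the principal curvatures k₁ᴾ, k₂ᴾ of any affine plane P ⊂ ℝ³, computed with respect to g_N, satisfy |kᵢᴾ| ≤ |τ| for i = 1,2. -/

import Mathlib

open scoped Matrix

noncomputable section

abbrev E3 := Fin 3 → ℝ

/-- The Heisenberg metric `g_N = dx² + dy² + (τ(y dx − x dy) + dz)²` on ℝ³,
as a matrix-valued function of the point `p = (x,y,z)`. -/
def gNil (τ : ℝ) (p : E3) : Matrix (Fin 3) (Fin 3) ℝ :=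
  !![1 + τ ^ 2 * (p 1) ^ 2, -(τ ^ 2 * p 0 * p 1), τ * p 1;
     -(τ ^ 2 * p 0 * p 1), 1 + τ ^ 2 * (p 0) ^ 2, -(τ * p 0);
     τ * p 1, -(τ * p 0), 1]

/-- The metric as a bilinear form on tangent vectors at `p`. -/
def gNilBil (τ : ℝ) (p X Y : E3) : ℝ := X ⬝ᵥ (gNil τ p) *ᵥ Y

/-- Partial derivative `∂ᵢ f` at `p`. -/
def pdiff (f : E3 → ℝ) (i : Fin 3) (p : E3) : ℝ := fderiv ℝ f p (Pi.single i 1)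

/-- Christoffel symbols `Γᵏᵢⱼ` of the Levi-Civita connection of `g_N`. -/
def christoffelNil (τ : ℝ) (k i j : Fin 3) (p : E3) : ℝ :=
  (1 / 2) * ∑ l : Fin 3, (gNil τ p)⁻¹ k l *
    (pdiff (fun q => gNil τ q j l) i p + pdiff (fun q => gNil τ q i l) j p -
      pdiff (fun q => gNil τ q i j) l p)

/-- Covariant derivative (w.r.t. `g_N`) of a vector field `W` along a curve `γ`. -/
def covDerivNil (τ : ℝ) (γ W : ℝ → E3) (t : ℝ) : E3 := fun k =>
  deriv (fun s => W s k) t +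
    ∑ i : Fin 3, ∑ j : Fin 3,
      christoffelNil τ k i j (γ t) * deriv (fun s => γ s i) t * W t j

/-! ### Auxiliary lemmas -/

set_option linter.unnecessarySeqFocus false

lemma hasF_coord (i : Fin 3) (p : E3) :
    HasFDerivAt (fun q : E3 => q i) (ContinuousLinearMap.proj (R := ℝ) (φ := fun _ : Fin 3 => ℝ) i) p :=
  (ContinuousLinearMap.proj i : E3 →L[ℝ] ℝ).hasFDerivAt

lemma pdiff_of_hasF {f : E3 → ℝ} {L : E3 →L[ℝ] ℝ} {p : E3} (h : HasFDerivAt f L p) (i : Fin 3) :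
    pdiff f i p = L (Pi.single i 1) := by rw [pdiff, h.fderiv]

lemma pdiff_g00 (τ : ℝ) (i : Fin 3) (p : E3) :
    pdiff (fun q => 1 + τ ^ 2 * (q 1) ^ 2) i p = (if i = 1 then 2 * τ^2 * p 1 else 0) := by
  have h := ((((hasF_coord 1 p).mul (hasF_coord 1 p)).const_mul (τ^2)).const_add 1)
  simp only [← sq] at h
  rw [pdiff_of_hasF (f := fun q => 1 + τ ^ 2 * (q 1) ^ 2) h i]
  fin_cases i <;> simp [Pi.single_apply] <;> ring

lemma pdiff_g01 (τ : ℝ) (i : Fin 3) (p : E3) :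
    pdiff (fun q => -(τ ^ 2 * q 0 * q 1)) i p =
      (if i = 0 then -(τ^2 * p 1) else if i = 1 then -(τ^2 * p 0) else 0) := by
  have h := ((((hasF_coord 0 p).const_mul (τ^2)).mul (hasF_coord 1 p)).neg)
  rw [pdiff_of_hasF (f := fun q => -(τ ^ 2 * q 0 * q 1)) h i]
  fin_cases i <;> simp [Pi.single_apply] <;> ring

lemma pdiff_g02 (τ : ℝ) (i : Fin 3) (p : E3) :
    pdiff (fun q => τ * q 1) i p = (if i = 1 then τ else 0) := by
  rw [pdiff_of_hasF ((hasF_coord 1 p).const_mul τ) i]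
  fin_cases i <;> simp [Pi.single_apply]

lemma pdiff_g11 (τ : ℝ) (i : Fin 3) (p : E3) :
    pdiff (fun q => 1 + τ ^ 2 * (q 0) ^ 2) i p = (if i = 0 then 2 * τ^2 * p 0 else 0) := by
  have h := ((((hasF_coord 0 p).mul (hasF_coord 0 p)).const_mul (τ^2)).const_add 1)
  simp only [← sq] at h
  rw [pdiff_of_hasF (f := fun q => 1 + τ ^ 2 * (q 0) ^ 2) h i]
  fin_cases i <;> simp [Pi.single_apply] <;> ring

lemma pdiff_g12 (τ : ℝ) (i : Fin 3) (p : E3) :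
    pdiff (fun q => -(τ * q 0)) i p = (if i = 0 then -τ else 0) := by
  rw [pdiff_of_hasF (f := fun q => -(τ * q 0)) ((hasF_coord 0 p).const_mul τ).neg i]
  fin_cases i <;> simp [Pi.single_apply]

lemma pdiff_const (c : ℝ) (i : Fin 3) (p : E3) : pdiff (fun _ => c) i p = 0 := by
  rw [pdiff_of_hasF (hasFDerivAt_const c p) i]; simp

lemma gNil_inv (τ : ℝ) (p : E3) : (gNil τ p)⁻¹ =
    !![1, 0, -(τ * p 1); 0, 1, τ * p 0;
       -(τ * p 1), τ * p 0, 1 + τ^2 * ((p 0)^2 + (p 1)^2)] := by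
  apply Matrix.inv_eq_right_inv
  ext i j
  fin_cases i <;> fin_cases j <;>
    simp [gNil, Matrix.mul_apply, Fin.sum_univ_three, Matrix.one_apply] <;> ring

/-- The explicit Christoffel symbols of Nil₃. -/
def Gam (τ : ℝ) (p : E3) : Fin 3 → Fin 3 → Fin 3 → ℝ :=
  ![![![0, τ^2 * p 1, 0], ![τ^2 * p 1, -(2 * τ^2 * p 0), τ], ![0, τ, 0]],
    ![![-(2 * τ^2 * p 1), τ^2 * p 0, -τ], ![τ^2 * p 0, 0, 0], ![-τ, 0, 0]],
    ![![-(2 * τ^3 * p 0 * p 1), τ^3 * ((p 0)^2 - (p 1)^2), -(τ^2 * p 0)],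
      ![τ^3 * ((p 0)^2 - (p 1)^2), 2 * τ^3 * p 0 * p 1, -(τ^2 * p 1)],
      ![-(τ^2 * p 0), -(τ^2 * p 1), 0]]]

set_option maxHeartbeats 1000000 in
lemma christoffel_val (τ : ℝ) (p : E3) (k i j : Fin 3) :
    christoffelNil τ k i j p = Gam τ p k i j := by
  fin_cases k <;> fin_cases i <;> fin_cases j <;>
  · rw [christoffelNil, gNil_inv, Fin.sum_univ_three]
    simp [gNil, Gam, pdiff_g00, pdiff_g01, pdiff_g02, pdiff_g11, pdiff_g12, pdiff_const,
      Matrix.vecHead, Matrix.vecTail]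
    try ring

lemma covDeriv_line (τ : ℝ) (p X : E3) :
    covDerivNil τ (fun t => p + t • X) (fun _ => X) 0 =
      fun k => ∑ i : Fin 3, ∑ j : Fin 3, Gam τ p k i j * X i * X j := by
  funext k
  have hd : ∀ i : Fin 3, deriv (fun s : ℝ => (p + s • X) i) 0 = X i := by
    intro i
    have he : (fun s : ℝ => (p + s • X) i) = fun s => p i + s * X i := by
      funext s; simp
    rw [he]
    simpa using (((hasDerivAt_id (0:ℝ)).mul_const (X i)).const_add (p i)).deriv
  have hg : p + (0:ℝ) • X = p := by simp
  simp only [covDerivNil, hg, hd, deriv_const', christoffel_val, zero_add]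

lemma key (τ a b c x y n0 n1 n2 : ℝ)
    (hX : a^2 + b^2 + (τ*(y*a - x*b) + c)^2 = 1)
    (hN : n0^2 + n1^2 + (τ*(y*n0 - x*n1) + n2)^2 = 1) :
    |2*τ*(τ*(y*a - x*b) + c)*(b*n0 - a*n1)| ≤ |τ| := by
  set w := τ*(y*a - x*b) + c with hw
  set u := τ*(y*n0 - x*n1) + n2 with hu
  have hs : (b*n0 - a*n1)^2 ≤ 1 - w^2 := by
    nlinarith [sq_nonneg (a*n0 + b*n1), sq_nonneg u,
      mul_nonneg (by nlinarith [sq_nonneg w] : (0:ℝ) ≤ a^2 + b^2) (sq_nonneg u)]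
  have h4 : 4*w^2*((b*n0 - a*n1)^2) ≤ 4*w^2*(1 - w^2) :=
    mul_le_mul_of_nonneg_left hs (by positivity)
  have h1 : (2*w*(b*n0 - a*n1))^2 ≤ 1 := by nlinarith [sq_nonneg (2*w^2 - 1)]
  have h2 : |2*w*(b*n0 - a*n1)| ≤ 1 :=
    abs_le_one_iff_mul_self_le_one.2 (by nlinarith)
  calc |2*τ*w*(b*n0 - a*n1)| = |τ| * |2*w*(b*n0 - a*n1)| := by
        rw [← abs_mul]; ring_nf
      _ ≤ |τ| * 1 := mul_le_mul_of_nonneg_left h2 (abs_nonneg τ)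
      _ = |τ| := mul_one _

/-- In Heisenberg space `Nil₃(τ) = (ℝ³, g_N)`, the principal
curvatures of any affine plane `P = {p : ⟨p − p₀, n⟩ = 0}` satisfy `|kᵢ| ≤ |τ|`.
Equivalently (bound on the eigenvalues of the shape operator): for every point
`p ∈ P`, every `g_N`-unit tangent vector `X` of `P` and every `g_N`-unit normal
`N` of `P` at `p`, the second fundamental form `II(X,X) = g_N(∇_{γ'}γ', N)`
(computed along the straight line `γ(t) = p + tX` lying in `P`) satisfies
`|II(X,X)| ≤ |τ|`. -/
theorem heisenberg_plane_principal_curvatures (τ : ℝ) (hτ : τ ≠ 0)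
    (p₀ n : E3) (hn : n ⬝ᵥ n = 1) (p : E3) (hp : (p - p₀) ⬝ᵥ n = 0)
    (X : E3) (hXtan : X ⬝ᵥ n = 0) (hXunit : gNilBil τ p X X = 1)
    (N : E3) (hNnormal : ∀ Y : E3, Y ⬝ᵥ n = 0 → gNilBil τ p N Y = 0)
    (hNunit : gNilBil τ p N N = 1) :
    |gNilBil τ p (covDerivNil τ (fun t => p + t • X) (fun _ => X) 0) N| ≤ |τ| := by
  have hXu : (X 0)^2 + (X 1)^2 + (τ*(p 1 * X 0 - p 0 * X 1) + X 2)^2 = 1 := by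
    rw [gNilBil] at hXunit
    simp [gNil, Matrix.mulVec, dotProduct, Fin.sum_univ_three] at hXunit
    linear_combination hXunit
  have hNu : (N 0)^2 + (N 1)^2 + (τ*(p 1 * N 0 - p 0 * N 1) + N 2)^2 = 1 := by
    rw [gNilBil] at hNunit
    simp [gNil, Matrix.mulVec, dotProduct, Fin.sum_univ_three] at hNunit
    linear_combination hNunit
  have K := key τ (X 0) (X 1) (X 2) (p 0) (p 1) (N 0) (N 1) (N 2) hXu hNu
  rw [covDeriv_line, gNilBil]
  have hgoal : (fun k => ∑ i : Fin 3, ∑ j : Fin 3, Gam τ p k i j * X i * X j) ⬝ᵥ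
      (gNil τ p) *ᵥ N =
      2*τ*(τ*(p 1 * X 0 - p 0 * X 1) + X 2)*(X 1 * N 0 - X 0 * N 1) := by
    simp [gNil, Gam, Matrix.mulVec, dotProduct, Fin.sum_univ_three,
      Matrix.vecHead, Matrix.vecTail]
    ring
  rw [hgoal]
  exact K
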